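/- Let A and B be action models and suppose for each event y of B we have a set [Pre](y) ⊆ E^A such that: (1) E₀^A = ⋃_{y ∈ E₀^B}[Pre](y); (2) for every y and label a, ⋃_{x∈[Pre](y)} Q_a^A(x) ⊆ ⋃_{y→_a y'}[Pre](y') and (⋃_{x∈[Pre](y)}(R_a^A(x) \ Q_a^A(x))) ∩ ⋃_{y→_a y'}[Pre](y') = ∅; (3) Pre^B(y) = ⋁_{x∈[Pre](y)} Pre^A(x). Then A and B are equivalent action models (M⊗A bisimilar to M⊗B for every Kripke model M). -/

import Mathlib

/-- Modal formulas over label set `A` and proposition set `P`. -/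
inductive Form (A P : Type) : Type
  | top : Form A P
  | atom : P → Form A P
  | neg : Form A P → Form A P
  | or : Form A P → Form A P → Form A P
  | dia : A → Form A P → Form A P

namespace Form
variable {A P : Type}
def and (φ ψ : Form A P) : Form A P := Form.neg ((Form.neg φ).or (Form.neg ψ))
def box (a : A) (φ : Form A P) : Form A P := Form.neg (Form.dia a (Form.neg φ))
def bot : Form A P := Form.neg Form.top
def imp (φ ψ : Form A P) : Form A P := (Form.neg φ).or ψ
end Form

/-- Kripke models. -/
structure Kripke (A P : Type) : Type 1 where
  W : Type
  val : W → P → Prop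
  rel : A → W → W → Prop
  actual : Set W

variable {A P : Type}

/-- Satisfaction of a modal formula at a world. -/
def sat (M : Kripke A P) : M.W → Form A P → Prop
  | _, .top => True
  | w, .atom p => M.val w p
  | w, .neg φ => ¬ sat M w φ
  | w, .or φ ψ => sat M w φ ∨ sat M w ψ
  | w, .dia a φ => ∃ v, M.rel a w v ∧ sat M v φ

/-- Semantic entailment over all Kripke models. -/
def entails (φ ψ : Form A P) : Prop := ∀ (M : Kripke A P) (w : M.W), sat M w φ → sat M w ψ

/-- Semantic equivalence. -/
def equivF (φ ψ : Form A P) : Prop := entails φ ψ ∧ entails ψ φ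

def satisfiable (φ : Form A P) : Prop := ∃ (M : Kripke A P) (w : M.W), sat M w φ

def valid (φ : Form A P) : Prop := ∀ (M : Kripke A P) (w : M.W), sat M w φ

/-- Finite disjunction (empty disjunction is `⊥`). -/
def bigOr : List (Form A P) → Form A P
  | [] => Form.bot
  | φ :: l => φ.or (bigOr l)

/-- Finite conjunction (empty conjunction is `⊤`). -/
def bigAnd : List (Form A P) → Form A P
  | [] => Form.top
  | φ :: l => φ.and (bigAnd l)

/-- `⋀_{a ∈ A} □_a (ξ a)` for a finite label set `A`. -/
noncomputable def boxConj [Fintype A] (ξ : A → Form A P) : Form A P :=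
  bigAnd ((Finset.univ : Finset A).toList.map fun a => Form.box a (ξ a))

/-- `R` is a bisimulation between Kripke models `M` and `N`. -/
def IsBisim (M N : Kripke A P) (R : M.W → N.W → Prop) : Prop :=
  ∀ w v, R w v →
    ((∀ p, M.val w p ↔ N.val v p) ∧
     (∀ a w', M.rel a w w' → ∃ v', N.rel a v v' ∧ R w' v') ∧
     (∀ a v', N.rel a v v' → ∃ w', M.rel a w w' ∧ R w' v'))

/-- Pointed bisimilarity of Kripke models (Zig0/Zag0 on actual worlds). -/
def Bisimilar (M N : Kripke A P) : Prop :=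
  ∃ R, IsBisim M N R ∧ (∀ w ∈ M.actual, ∃ v ∈ N.actual, R w v) ∧
       (∀ v ∈ N.actual, ∃ w ∈ M.actual, R w v)

/-- Action models. -/
structure ActionModel (A P : Type) : Type 1 where
  E : Type
  pre : E → Form A P
  rel : A → E → E → Prop
  actual : Set E

/-- The update product `M ⊗ 𝔄`. -/
def update (M : Kripke A P) (𝔄 : ActionModel A P) : Kripke A P where
  W := {p : M.W × 𝔄.E // sat M p.1 (𝔄.pre p.2)}
  val w p := M.val w.1.1 p
  rel a w v := M.rel a w.1.1 v.1.1 ∧ 𝔄.rel a w.1.2 v.1.2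
  actual := {w | w.1.1 ∈ M.actual ∧ w.1.2 ∈ 𝔄.actual}

/-- Action model equivalence: same updating effect (up to bisimilarity) on every Kripke model. -/
def AMEquiv (𝔄 𝔅 : ActionModel A P) : Prop :=
  ∀ M : Kripke A P, Bisimilar (update M 𝔄) (update M 𝔅)

/-- `S` is an action bisimulation between action models `𝔄` and `𝔅`. -/
def IsActBisim (𝔄 𝔅 : ActionModel A P) (S : 𝔄.E → 𝔅.E → Prop) : Prop :=
  ∀ x y, S x y →
    (equivF (𝔄.pre x) (𝔅.pre y) ∧
     (∀ a x', 𝔄.rel a x x' → satisfiable ((𝔄.pre x).and (Form.dia a (𝔄.pre x'))) →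
        ∃ y', 𝔅.rel a y y' ∧ S x' y') ∧
     (∀ a y', 𝔅.rel a y y' → satisfiable ((𝔅.pre y).and (Form.dia a (𝔅.pre y'))) →
        ∃ x', 𝔄.rel a x x' ∧ S x' y'))

/-- Action bisimilarity of action models (with Zig0/Zag0 on actual events). -/
def ActBisimilar (𝔄 𝔅 : ActionModel A P) : Prop :=
  ∃ S, IsActBisim 𝔄 𝔅 S ∧ (∀ x ∈ 𝔄.actual, ∃ y ∈ 𝔅.actual, S x y) ∧
       (∀ y ∈ 𝔅.actual, ∃ x ∈ 𝔄.actual, S x y)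

/-- Zig of the generalized action emulation:
`η(x,y) ⊨ □_a (Pre^𝔄(x') → ⋁_{y →_a y'} (Pre^𝔅(y') ∧ η(x',y')))`, rendered semantically. -/
def GAEZig (𝔄 𝔅 : ActionModel A P) (η : 𝔄.E → 𝔅.E → Form A P) : Prop :=
  ∀ (a : A) (x : 𝔄.E) (y : 𝔅.E) (x' : 𝔄.E), 𝔄.rel a x x' →
    ∀ (M : Kripke A P) (w v : M.W), sat M w (η x y) → M.rel a w v → sat M v (𝔄.pre x') →
      ∃ y', 𝔅.rel a y y' ∧ sat M v (𝔅.pre y') ∧ sat M v (η x' y')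

/-- Zag of the generalized action emulation. -/
def GAEZag (𝔄 𝔅 : ActionModel A P) (η : 𝔄.E → 𝔅.E → Form A P) : Prop :=
  ∀ (a : A) (x : 𝔄.E) (y : 𝔅.E) (y' : 𝔅.E), 𝔅.rel a y y' →
    ∀ (M : Kripke A P) (w v : M.W), sat M w (η x y) → M.rel a w v → sat M v (𝔅.pre y') →
      ∃ x', 𝔄.rel a x x' ∧ sat M v (𝔄.pre x') ∧ sat M v (η x' y')

/-- Zig0 of the generalized action emulation:
`Pre^𝔄(x) ⊨ ⋁_{y ∈ E₀^𝔅} (Pre^𝔅(y) ∧ η(x,y))` for actual `x`. -/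
def GAEZig0 (𝔄 𝔅 : ActionModel A P) (η : 𝔄.E → 𝔅.E → Form A P) : Prop :=
  ∀ x ∈ 𝔄.actual, ∀ (M : Kripke A P) (w : M.W), sat M w (𝔄.pre x) →
    ∃ y ∈ 𝔅.actual, sat M w (𝔅.pre y) ∧ sat M w (η x y)

/-- Zag0 of the generalized action emulation. -/
def GAEZag0 (𝔄 𝔅 : ActionModel A P) (η : 𝔄.E → 𝔅.E → Form A P) : Prop :=
  ∀ y ∈ 𝔅.actual, ∀ (M : Kripke A P) (w : M.W), sat M w (𝔅.pre y) →
    ∃ x ∈ 𝔄.actual, sat M w (𝔄.pre x) ∧ sat M w (η x y)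

/-- `η` is a generalized action emulation witnessing `𝔄 ⇄_G 𝔅`. -/
def IsGAE (𝔄 𝔅 : ActionModel A P) (η : 𝔄.E → 𝔅.E → Form A P) : Prop :=
  GAEZig 𝔄 𝔅 η ∧ GAEZag 𝔄 𝔅 η ∧ GAEZig0 𝔄 𝔅 η ∧ GAEZag0 𝔄 𝔅 η

/-- `S` is a propositional action emulation witnessing `𝔄 ⇄_P 𝔅`
(Consistency, Zig, Zag, Zig0, Zag0; disjunctions rendered semantically). -/
def IsPAEW (𝔄 𝔅 : ActionModel A P) (S : 𝔄.E → 𝔅.E → Prop) : Prop :=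
  (∀ x y, S x y → satisfiable ((𝔄.pre x).and (𝔅.pre y))) ∧
  (∀ (a : A) x y x', S x y → 𝔄.rel a x x' →
     ∀ (M : Kripke A P) (w : M.W), sat M w (𝔄.pre x') →
       ∃ y', 𝔅.rel a y y' ∧ S x' y' ∧ sat M w (𝔅.pre y')) ∧
  (∀ (a : A) x y y', S x y → 𝔅.rel a y y' →
     ∀ (M : Kripke A P) (w : M.W), sat M w (𝔅.pre y') →
       ∃ x', 𝔄.rel a x x' ∧ S x' y' ∧ sat M w (𝔄.pre x')) ∧
  (∀ x ∈ 𝔄.actual, ∀ (M : Kripke A P) (w : M.W), sat M w (𝔄.pre x) →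
     ∃ y ∈ 𝔅.actual, S x y ∧ sat M w (𝔅.pre y)) ∧
  (∀ y ∈ 𝔅.actual, ∀ (M : Kripke A P) (w : M.W), sat M w (𝔅.pre y) →
     ∃ x ∈ 𝔄.actual, S x y ∧ sat M w (𝔄.pre x))

/-- `S` is an action emulation witnessing `𝔄 ⇄ 𝔅`
(Consistency, Zig, Zag, Zig0, Zag0; disjunctions and boxes rendered semantically). -/
def IsAEW (𝔄 𝔅 : ActionModel A P) (S : 𝔄.E → 𝔅.E → Prop) : Prop :=
  (∀ x y, S x y → satisfiable ((𝔄.pre x).and (𝔅.pre y))) ∧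
  (∀ (a : A) x y x', S x y → 𝔄.rel a x x' →
     ∀ (M : Kripke A P) (w v : M.W), sat M w (𝔄.pre x) → sat M w (𝔅.pre y) →
       M.rel a w v → sat M v (𝔄.pre x') →
       ∃ y', 𝔅.rel a y y' ∧ S x' y' ∧ sat M v (𝔅.pre y')) ∧
  (∀ (a : A) x y y', S x y → 𝔅.rel a y y' →
     ∀ (M : Kripke A P) (w v : M.W), sat M w (𝔄.pre x) → sat M w (𝔅.pre y) →
       M.rel a w v → sat M v (𝔅.pre y') →
       ∃ x', 𝔄.rel a x x' ∧ S x' y' ∧ sat M v (𝔄.pre x')) ∧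
  (∀ x ∈ 𝔄.actual, ∀ (M : Kripke A P) (w : M.W), sat M w (𝔄.pre x) →
     ∃ y ∈ 𝔅.actual, S x y ∧ sat M w (𝔅.pre y)) ∧
  (∀ y ∈ 𝔅.actual, ∀ (M : Kripke A P) (w : M.W), sat M w (𝔅.pre y) →
     ∃ x ∈ 𝔄.actual, S x y ∧ sat M w (𝔄.pre x))

/-- `L₀`: formulas `α` such that if `α` is satisfiable and `α ⊨ □_a φ` then `φ` is valid. -/
def L0 : Set (Form A P) :=
  {α | satisfiable α → ∀ (a : A) (φ : Form A P), entails α (Form.box a φ) → valid φ}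

/-- `Φ` is `Ψ`-regular. -/
def Regular (Φ Ψ : Set (Form A P)) : Prop :=
  ∀ φ ∈ Φ, ∀ ψ ∈ Ψ, entails ψ φ ∨ entails ψ φ.neg

/-- `Φ` is `Ψ`-basis: every `φ ∈ Φ` is equivalent to a disjunction of a subset of `Ψ`
(disjunction rendered semantically). -/
def IsBasisFor (Φ Ψ : Set (Form A P)) : Prop :=
  ∀ φ ∈ Φ, ∃ Ψ' ⊆ Ψ, ∀ (M : Kripke A P) (w : M.W), sat M w φ ↔ ∃ ψ ∈ Ψ', sat M w ψ

/-- `Φ` is `Ψ`-discrete: if `φ ∈ Φ` entails a finite disjunction `⋁_l ⋀_a □_a ξ_l^a`, then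
`φ ⊨ ⋁_l ⋁ G(⋀_a □_a ξ_l^a, Ψ)` (outer disjunctions rendered semantically). -/
def Discrete [Fintype A] (Φ Ψ : Set (Form A P)) : Prop :=
  ∀ φ ∈ Φ, ∀ (L : ℕ) (ξ : Fin L → A → Form A P),
    entails φ (bigOr ((List.finRange L).map fun l => boxConj (ξ l))) →
    ∀ (M : Kripke A P) (w : M.W), sat M w φ →
      ∃ (l : Fin L), ∃ ψ ∈ Ψ, entails ψ (boxConj (ξ l)) ∧ sat M w ψ

/-- `Φ` is `Ψ`-known: if `φ ∈ Φ` and `φ ⊨ □_a ξ`, then `φ ⊨ □_a ⋁ G(ξ, Ψ)`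
(inner disjunction rendered semantically). -/
def Known (Φ Ψ : Set (Form A P)) : Prop :=
  ∀ φ ∈ Φ, ∀ (a : A) (χ : Form A P), entails φ (Form.box a χ) →
    ∀ (M : Kripke A P) (w v : M.W), sat M w φ → M.rel a w v →
      ∃ ψ ∈ Ψ, entails ψ χ ∧ sat M v ψ

/-- `R_a^𝔄(x)`. -/
def Rset (𝔄 : ActionModel A P) (a : A) (x : 𝔄.E) : Set 𝔄.E :=
  {y | satisfiable ((𝔄.pre x).and (Form.dia a (𝔄.pre y)))}

/-- `Q_a^𝔄(x)`. -/
def Qset (𝔄 : ActionModel A P) (a : A) (x : 𝔄.E) : Set 𝔄.E :=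
  {y | 𝔄.rel a x y ∧ satisfiable ((𝔄.pre x).and (Form.dia a (𝔄.pre y)))}

/-- Modal depth. -/
def depth : Form A P → ℕ
  | .top => 0
  | .atom _ => 0
  | .neg φ => depth φ
  | .or φ ψ => max (depth φ) (depth ψ)
  | .dia _ φ => depth φ + 1

/-- Subformulas. -/
def Subf : Form A P → List (Form A P)
  | .top => [.top]
  | .atom p => [.atom p]
  | .neg φ => .neg φ :: Subf φ
  | .or φ ψ => .or φ ψ :: (Subf φ ++ Subf ψ)
  | .dia a φ => .dia a φ :: Subf φ

/-- Single negation. -/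
def singleNeg : Form A P → Form A P
  | .neg φ => φ
  | φ => .neg φ

/-- Closure under subformulas and single negations. -/
def closureF (φ : Form A P) : Set (Form A P) :=
  {χ | χ ∈ Subf φ ∨ ∃ ψ ∈ Subf φ, χ = singleNeg ψ}

/-!
A generalized action emulation `η` yields, on every Kripke model `M`, the bisimulation relating
`(w, x) ∈ M ⊗ 𝔄` to `(w, y) ∈ M ⊗ 𝔅` whenever `w ⊨ η(x, y)`. Here `η(x, y)` is `Pre^𝔄(x)` when
`x ∈ [Pre](y)` and `⊥` otherwise. Condition (3) moves preconditions between the two models, (1)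
gives the conditions on actual events, and (2) gives Zig and Zag: an `a`-step of `M` from a
`Pre^𝔄(x)`-world into a `Pre^𝔄(x')`-world puts `x'` into `R_a(x)`, and the separation half of (2)
forces such an `x'` lying in `[Pre]` of an `a`-successor of `y` into `Q_a(x)`, i.e. makes
`x →_a x'` an edge of `𝔄`.
-/

theorem sat_and {M : Kripke A P} {w : M.W} {φ ψ : Form A P} :
    sat M w (φ.and ψ) ↔ sat M w φ ∧ sat M w ψ := by
  simp only [Form.and, sat, not_or, not_not]

theorem not_sat_bot {M : Kripke A P} {w : M.W} : ¬ sat M w Form.bot :=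
  fun h => h trivial

theorem IsGAE.amEquiv {𝔄 𝔅 : ActionModel A P} {η : 𝔄.E → 𝔅.E → Form A P}
    (hη : IsGAE 𝔄 𝔅 η) : AMEquiv 𝔄 𝔅 := by
  obtain ⟨zig, zag, zig0, zag0⟩ := hη
  intro M
  refine ⟨fun u u' => u.1.1 = u'.1.1 ∧ sat M u.1.1 (η u.1.2 u'.1.2), ?_, ?_, ?_⟩
  · rintro ⟨⟨w, x⟩, _⟩ ⟨⟨_, y⟩, _⟩ ⟨rfl, hwη⟩
    refine ⟨fun _ => Iff.rfl, ?_, ?_⟩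
    · rintro a ⟨⟨v, x'⟩, hv⟩ ⟨hwv, hxx'⟩
      obtain ⟨y', hyy', hv', hη'⟩ := zig a x y x' hxx' M w v hwη hwv hv
      exact ⟨⟨⟨v, y'⟩, hv'⟩, ⟨hwv, hyy'⟩, rfl, hη'⟩
    · rintro a ⟨⟨v, y'⟩, hv⟩ ⟨hwv, hyy'⟩
      obtain ⟨x', hxx', hv', hη'⟩ := zag a x y y' hyy' M w v hwη hwv hv
      exact ⟨⟨⟨v, x'⟩, hv'⟩, ⟨hwv, hxx'⟩, rfl, hη'⟩
  · rintro ⟨⟨w, x⟩, hw⟩ ⟨hwM, hx⟩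
    obtain ⟨y, hy, hwy, hη⟩ := zig0 x hx M w hw
    exact ⟨⟨⟨w, y⟩, hwy⟩, ⟨hwM, hy⟩, rfl, hη⟩
  · rintro ⟨⟨w, y⟩, hw⟩ ⟨hwM, hy⟩
    obtain ⟨x, hx, hwx, hη⟩ := zag0 y hy M w hw
    exact ⟨⟨⟨w, x⟩, hwx⟩, ⟨hwM, hx⟩, rfl, hη⟩

section CoverEmulation

variable {𝔄 𝔅 : ActionModel A P}

theorem mem_Rset_of_rel {a : A} {x x' : 𝔄.E} {M : Kripke A P} {w v : M.W}
    (hw : sat M w (𝔄.pre x)) (hwv : M.rel a w v) (hv : sat M v (𝔄.pre x')) :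
    x' ∈ Rset 𝔄 a x :=
  ⟨M, w, sat_and.2 ⟨hw, v, hwv, hv⟩⟩

theorem mem_Qset_of_rel {a : A} {x x' : 𝔄.E} (hxx' : 𝔄.rel a x x') {M : Kripke A P} {w v : M.W}
    (hw : sat M w (𝔄.pre x)) (hwv : M.rel a w v) (hv : sat M v (𝔄.pre x')) :
    x' ∈ Qset 𝔄 a x :=
  ⟨hxx', mem_Rset_of_rel hw hwv hv⟩

open Classical in
noncomputable def coverEmulation (PreS : 𝔅.E → Set 𝔄.E) (x : 𝔄.E) (y : 𝔅.E) : Form A P :=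
  if x ∈ PreS y then 𝔄.pre x else Form.bot

theorem sat_coverEmulation {PreS : 𝔅.E → Set 𝔄.E} {x : 𝔄.E} {y : 𝔅.E} {M : Kripke A P}
    {w : M.W} : sat M w (coverEmulation PreS x y) ↔ x ∈ PreS y ∧ sat M w (𝔄.pre x) := by
  unfold coverEmulation
  split_ifs with hx
  · exact ⟨fun h => ⟨hx, h⟩, And.right⟩
  · exact ⟨fun h => (not_sat_bot h).elim, fun h => (hx h.1).elim⟩

variable {PreS : 𝔅.E → Set 𝔄.E}
  (h3 : ∀ y (M : Kripke A P) (w : M.W), sat M w (𝔅.pre y) ↔ ∃ x ∈ PreS y, sat M w (𝔄.pre x))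
include h3

theorem coverEmulation_zig
    (h2a : ∀ (y : 𝔅.E) (a : A),
      (⋃ x ∈ PreS y, Qset 𝔄 a x) ⊆ ⋃ y' ∈ {y' | 𝔅.rel a y y'}, PreS y') :
    GAEZig 𝔄 𝔅 (coverEmulation PreS) := by
  intro a x y x' hxx' M w v hη hwv hv
  obtain ⟨hx, hw⟩ := sat_coverEmulation.1 hη
  have hQ : x' ∈ ⋃ x ∈ PreS y, Qset 𝔄 a x :=
    Set.mem_biUnion hx (mem_Qset_of_rel hxx' hw hwv hv)
  obtain ⟨y', hyy', hx'⟩ := Set.mem_iUnion₂.1 (h2a y a hQ)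
  exact ⟨y', hyy', (h3 y' M v).2 ⟨x', hx', hv⟩, sat_coverEmulation.2 ⟨hx', hv⟩⟩

theorem coverEmulation_zag
    (h2b : ∀ (y : 𝔅.E) (a : A),
      (⋃ x ∈ PreS y, (Rset 𝔄 a x \ Qset 𝔄 a x)) ∩ (⋃ y' ∈ {y' | 𝔅.rel a y y'}, PreS y') = ∅) :
    GAEZag 𝔄 𝔅 (coverEmulation PreS) := by
  intro a x y y' hyy' M w v hη hwv hv
  obtain ⟨hx, hw⟩ := sat_coverEmulation.1 hη
  obtain ⟨x', hx', hv'⟩ := (h3 y' M v).1 hv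
  have hQ : x' ∈ Qset 𝔄 a x := by
    by_contra hQ
    have hmem : x' ∈ (⋃ x ∈ PreS y, (Rset 𝔄 a x \ Qset 𝔄 a x)) ∩
        (⋃ y' ∈ {y' | 𝔅.rel a y y'}, PreS y') :=
      ⟨Set.mem_biUnion hx ⟨mem_Rset_of_rel hw hwv hv', hQ⟩, Set.mem_biUnion hyy' hx'⟩
    rwa [h2b y a] at hmem
  exact ⟨x', hQ.1, hv', sat_coverEmulation.2 ⟨hx', hv'⟩⟩

theorem coverEmulation_zig0 (h1 : 𝔄.actual = ⋃ y ∈ 𝔅.actual, PreS y) :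
    GAEZig0 𝔄 𝔅 (coverEmulation PreS) := by
  intro x hx M w hw
  rw [h1] at hx
  obtain ⟨y, hy, hxy⟩ := Set.mem_iUnion₂.1 hx
  exact ⟨y, hy, (h3 y M w).2 ⟨x, hxy, hw⟩, sat_coverEmulation.2 ⟨hxy, hw⟩⟩

theorem coverEmulation_zag0 (h1 : 𝔄.actual = ⋃ y ∈ 𝔅.actual, PreS y) :
    GAEZag0 𝔄 𝔅 (coverEmulation PreS) := by
  intro y hy M w hw
  obtain ⟨x, hxy, hx⟩ := (h3 y M w).1 hw
  exact ⟨x, h1 ▸ Set.mem_biUnion hy hxy, hx, sat_coverEmulation.2 ⟨hxy, hx⟩⟩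

end CoverEmulation

/-- if the events of `𝔅` are labelled by sets `[Pre](y) ⊆ E^𝔄` satisfying
the cover, successor and precondition conditions, then `𝔄 ≡ 𝔅`. -/
theorem sep_cover_equiv (𝔄 𝔅 : ActionModel A P) (PreS : 𝔅.E → Set 𝔄.E)
    (h1 : 𝔄.actual = ⋃ y ∈ 𝔅.actual, PreS y)
    (h2a : ∀ (y : 𝔅.E) (a : A),
      (⋃ x ∈ PreS y, Qset 𝔄 a x) ⊆ ⋃ y' ∈ {y' | 𝔅.rel a y y'}, PreS y')
    (h2b : ∀ (y : 𝔅.E) (a : A),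
      (⋃ x ∈ PreS y, (Rset 𝔄 a x \ Qset 𝔄 a x)) ∩ (⋃ y' ∈ {y' | 𝔅.rel a y y'}, PreS y') = ∅)
    (h3 : ∀ y (M : Kripke A P) (w : M.W),
      sat M w (𝔅.pre y) ↔ ∃ x ∈ PreS y, sat M w (𝔄.pre x)) :
    AMEquiv 𝔄 𝔅 :=
  IsGAE.amEquiv ⟨coverEmulation_zig h3 h2a, coverEmulation_zag h3 h2b,
    coverEmulation_zig0 h3 h1, coverEmulation_zag0 h3 h1⟩
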